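/- Let J be as given, and suppose that every edge of the coding graph E_J is non-negative and that E_J contains no non-positive cycles. If the labeled graph (E_J, E) is not left-synchronizing, then there exist two distinct cycles in E_J with the same E-label. -/

import Mathlib

/-- A finite directed multigraph. -/
structure FinGraph where
  V : Type
  E : Type
  fintV : Fintype V
  fintE : Fintype E
  src : E → V
  rng : E → V

variable {G : FinGraph}

/-- A finite path in the graph `G`: a source vertex together with a compatible
list of edges (a vertex is a path of length 0). -/
structure FPath (G : FinGraph) where
  source : G.V
  edges : List G.E
  head_src : ∀ e ∈ edges.head?, G.src e = source
  chain : edges.Chain' fun e f => G.rng e = G.src f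

/-- The range (terminal vertex) of a finite path. -/
def FPath.range (p : FPath G) : G.V :=
  p.edges.getLast?.elim p.source G.rng

/-- The length-0 path at a vertex. -/
def FPath.nil (G : FinGraph) (v : G.V) : FPath G :=
  ⟨v, [], by simp, List.isChain_nil⟩

/-- `p.Prefix q` : the path `p` is an initial segment of the path `q`. -/
def FPath.Prefix (p q : FPath G) : Prop :=
  p.source = q.source ∧ p.edges <+: q.edges

/-- The path obtained by removing the first edge (the tail `κ` of `ν = eκ`). -/
def FPath.tail (p : FPath G) : FPath G where
  source := p.edges.head?.elim p.source G.rng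
  edges := p.edges.tail
  head_src := by
    cases hp : p.edges with
    | nil => simp
    | cons a l =>
      have h := p.chain
      rw [hp] at h
      simp only [List.Chain', List.isChain_cons] at h
      intro e he
      simp only [hp, List.head?_cons, Option.elim, List.tail_cons] at he ⊢
      exact (h.1 e he).symm
  chain := p.chain.tail

/-- An infinite path in the graph `G`. -/
structure IPath (G : FinGraph) where
  edges : ℕ → G.E
  chain : ∀ i, G.rng (edges i) = G.src (edges (i + 1))

/-- The source vertex of an infinite path. -/
def IPath.source (p : IPath G) : G.V := G.src (p.edges 0)

/-- The cylinder set `Z(p)` of a finite path `p`: all infinite paths with prefix `p`. -/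
def cylinder (p : FPath G) : Set (IPath G) :=
  {q | q.source = p.source ∧ ∀ i, (h : i < p.edges.length) → q.edges i = p.edges.get ⟨i, h⟩}

/-- A finite collection `S` of finite paths is a partition of the path `ν`:
the cylinder sets are pairwise disjoint with union `Z(ν)`. -/
def IsPartitionOfPath (S : Set (FPath G)) (ν : FPath G) : Prop :=
  S.Finite ∧ (∀ p ∈ S, ∀ q ∈ S, p ≠ q → cylinder p ∩ cylinder q = ∅) ∧
    (⋃ p ∈ S, cylinder p) = cylinder ν

/-- A finite collection `S` of finite paths is a partition of the vertex `v`. -/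
def IsPartitionOf (S : Set (FPath G)) (v : G.V) : Prop :=
  IsPartitionOfPath S (FPath.nil G v)

/-- Standing assumptions: no sinks, no sources, every cycle has an exit. -/
structure Standing (G : FinGraph) : Prop where
  no_sinks : ∀ v : G.V, ∃ e, G.src e = v
  no_sources : ∀ v : G.V, ∃ e, G.rng e = v
  cycles_exit : ∀ p : FPath G, p.edges ≠ [] → p.range = p.source →
    ∃ e ∈ p.edges, ∃ f, f ≠ e ∧ G.src f = G.src e

/-- The combinatorial conditions making `u_J = Σ_{(μ,ν) ∈ J} S_μ S_ν^*` a unitary: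
`J` is finite, `s(μ) = s(ν)`, `r(μ) = r(ν)`, `|ν| ≥ 1` for all `(μ,ν) ∈ J`, and both
families of cylinder sets are pairwise disjoint with union all of `E^∞`. -/
structure IsUnitaryJ (G : FinGraph) (J : Set (FPath G × FPath G)) : Prop where
  finite : J.Finite
  src_eq : ∀ p ∈ J, (Prod.fst p).source = (Prod.snd p).source
  rng_eq : ∀ p ∈ J, FPath.range (Prod.fst p) = FPath.range (Prod.snd p)
  ne_nil : ∀ p ∈ J, (Prod.snd p).edges ≠ []
  disj₁ : ∀ p ∈ J, ∀ q ∈ J, p ≠ q → cylinder (Prod.fst p) ∩ cylinder (Prod.fst q) = ∅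
  union₁ : (⋃ p ∈ J, cylinder (Prod.fst p)) = Set.univ
  disj₂ : ∀ p ∈ J, ∀ q ∈ J, p ≠ q → cylinder (Prod.snd p) ∩ cylinder (Prod.snd q) = ∅
  union₂ : (⋃ p ∈ J, cylinder (Prod.snd p)) = Set.univ

/-- Adjacency in the coding graph `E_J`: there is an edge from `p = (μ₁, e₁ν₁)` to
`q = (μ₂, e₂ν₂)` iff the tail `ν₁` and `μ₂` are prefix-comparable
(the combinatorial content of `S_{ν₁}^* S_{μ₂} ≠ 0`). -/
def CGAdj (p q : FPath G × FPath G) : Prop :=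
  FPath.Prefix p.2.tail q.1 ∨ FPath.Prefix q.1 p.2.tail

/-- The degree `|μ₂| − |ν₁|` of the coding-graph edge from `p` to `q`. -/
def cgDeg (p q : FPath G × FPath G) : ℤ :=
  (q.1.edges.length : ℤ) - (p.2.tail.edges.length : ℤ)

/-- `IsAppend p q r` : the path `r` is the concatenation `p q`. -/
def IsAppend (p q r : FPath G) : Prop :=
  r.source = p.source ∧ q.source = p.range ∧ r.edges = p.edges ++ q.edges

/-- A finite path in the coding graph `E_J`, recorded by the (nonempty) list of
vertices of `J` it visits (a single vertex is a path of length 0). -/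
structure CGPath (G : FinGraph) (J : Set (FPath G × FPath G)) where
  verts : List (FPath G × FPath G)
  ne : verts ≠ []
  mem : ∀ v ∈ verts, v ∈ J
  adj : verts.Chain' CGAdj

/-- The `E`-label of a path in the coding graph: the list of distinguished first
edges `e` of the second coordinates of the vertices it visits. -/
def CGPath.elabel {J : Set (FPath G × FPath G)} (ω : CGPath G J) : List G.E :=
  ω.verts.filterMap fun v => v.2.edges.head?

/-- `IsLabelOf l γ` : `γ` is the `L_J`-label of the coding-graph path visiting the
vertices in the list `l` (all of whose edges are non-negative): the concatenation of
the `L_J`-labels of its edges, and the empty path at `r(μ)` for the length-0 path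
at a vertex `(μ, eν)`. -/
inductive IsLabelOf : List (FPath G × FPath G) → FPath G → Prop
  | single (p : FPath G × FPath G) (γ : FPath G) :
      γ.edges = [] → γ.source = FPath.range p.1 → IsLabelOf [p] γ
  | cons (p q : FPath G × FPath G) (rest : List (FPath G × FPath G)) (α γ δ : FPath G) :
      IsAppend p.2.tail α q.1 → IsLabelOf (q :: rest) γ → IsAppend α γ δ →
      IsLabelOf (p :: q :: rest) δ

/-- Every edge of the coding graph `E_J` is non-negative. -/
def AllEdgesNonneg (G : FinGraph) (J : Set (FPath G × FPath G)) : Prop :=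
  ∀ p ∈ J, ∀ q ∈ J, CGAdj p q → 0 ≤ cgDeg p q

/-- The coding graph `E_J` contains a non-positive cycle. -/
def HasNonposCycle (G : FinGraph) (J : Set (FPath G × FPath G)) : Prop :=
  ∃ ω : CGPath G J, 2 ≤ ω.verts.length ∧ ω.verts.getLast ω.ne = ω.verts.head ω.ne ∧
    ω.verts.Chain' fun p q => cgDeg p q ≤ 0

/-- All outgoing edges of the vertex `p` in the coding graph `E_J` are positive. -/
def AllOutPositive (G : FinGraph) (J : Set (FPath G × FPath G))
    (p : FPath G × FPath G) : Prop :=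
  ∀ q ∈ J, CGAdj p q → 0 < cgDeg p q

/-- `IsSnoc p f q` : the path `q` is `p` extended by the single edge `f`. -/
def IsSnoc (p : FPath G) (f : G.E) (q : FPath G) : Prop :=
  q.source = p.source ∧ q.edges = p.edges ++ [f]

/-- `IsSplitting G J p J'` : `J'` is the splitting of `J` at the vertex `p = (μ, eν)`,
i.e. `J' = (J ∖ {(μ,eν)}) ∪ {(μf, eνf) : f ∈ E¹, s(f) = r(μ)}`. -/
def IsSplitting (G : FinGraph) (J : Set (FPath G × FPath G)) (p : FPath G × FPath G)
    (J' : Set (FPath G × FPath G)) : Prop :=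
  p ∈ J ∧ ∀ q, q ∈ J' ↔ (q ∈ J ∧ q ≠ p) ∨
    ∃ f, G.src f = FPath.range p.1 ∧ IsSnoc p.1 f q.1 ∧ IsSnoc p.2 f q.2

/-- The set of negative edges of the coding graph `E_J`. -/
def negEdgeSet (G : FinGraph) (J : Set (FPath G × FPath G)) :
    Set ((FPath G × FPath G) × (FPath G × FPath G)) :=
  {e | e.1 ∈ J ∧ e.2 ∈ J ∧ CGAdj e.1 e.2 ∧ cgDeg e.1 e.2 < 0}

/-- `IsFinalNeg G J p q ω d` : the edge from `p` to `q` in `E_J` is a final negative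
edge with destination `d`, via the zero path `ω` from `q` to `d`; the height of the
edge is `ω.verts.length - 1`. -/
def IsFinalNeg (G : FinGraph) (J : Set (FPath G × FPath G))
    (p q : FPath G × FPath G) (ω : CGPath G J) (d : FPath G × FPath G) : Prop :=
  p ∈ J ∧ q ∈ J ∧ CGAdj p q ∧ cgDeg p q < 0 ∧
    ω.verts.head ω.ne = q ∧ ω.verts.getLast ω.ne = d ∧
    (ω.verts.Chain' fun a b => cgDeg a b = 0) ∧ AllOutPositive G J d

/-- `(E_J, E)` is left-synchronizing with delay `m` : any two paths of length `m`
(i.e. with `m+1` vertices) in `E_J` with the same `E`-label have the same source. -/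
def LeftSyncDelay (G : FinGraph) (J : Set (FPath G × FPath G)) (m : ℕ) : Prop :=
  ∀ ω ξ : CGPath G J, ω.verts.length = m + 1 → ξ.verts.length = m + 1 →
    ω.elabel = ξ.elabel → ω.verts.head ω.ne = ξ.verts.head ξ.ne

/-- An infinite path in the coding graph `E_J`. -/
structure CGIPath (G : FinGraph) (J : Set (FPath G × FPath G)) where
  verts : ℕ → FPath G × FPath G
  mem : ∀ i, verts i ∈ J
  adj : ∀ i, CGAdj (verts i) (verts (i + 1))

/-- The infinite `E`-label of an infinite coding-graph path is the infinite path `α`. -/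
def ELabelInf {J : Set (FPath G × FPath G)} (ω : CGIPath G J) (α : IPath G) : Prop :=
  ∀ i, (ω.verts i).2.edges.head? = some (α.edges i)

/-- A transducer with input alphabet `A`, output alphabet `B`, a finite state set,
an initial state and a transition function. -/
structure Transducer (A B : Type) where
  S : Type
  finS : Finite S
  init : S
  tr : S → A → S × List B

/-- The state sequence of a transducer on an infinite input word. -/
def Transducer.states {A B : Type} (T : Transducer A B) (α : ℕ → A) : ℕ → T.S
  | 0 => T.init
  | n + 1 => (T.tr (T.states α n) (α n)).1

/-- The `n`-th output block of a transducer on an infinite input word. -/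
def Transducer.outBlock {A B : Type} (T : Transducer A B) (α : ℕ → A) (n : ℕ) : List B :=
  (T.tr (T.states α n) (α n)).2

/-- The concatenation of the first `n` blocks of a sequence of finite words. -/
def joinUpTo {X : Type} (f : ℕ → List X) (n : ℕ) : List X :=
  ((List.range n).map f).flatten

/-- Two infinite concatenations of sequences of finite words are equal. -/
def StreamsEq {X : Type} (f g : ℕ → List X) : Prop :=
  (∀ n, ∃ m, joinUpTo f n <+: joinUpTo g m) ∧ ∀ n, ∃ m, joinUpTo g n <+: joinUpTo f m

/-- The type of edges of the coding graph `E_J`. -/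
def CGEdgeT (G : FinGraph) (J : Set (FPath G × FPath G)) : Type :=
  {e : (FPath G × FPath G) × (FPath G × FPath G) // e.1 ∈ J ∧ e.2 ∈ J ∧ CGAdj e.1 e.2}

/-- The sequence of edges of an infinite coding-graph path. -/
def CGIPath.edgeSeq {J : Set (FPath G × FPath G)} (ω : CGIPath G J) (i : ℕ) : CGEdgeT G J :=
  ⟨(ω.verts i, ω.verts (i + 1)), ω.mem i, ω.mem (i + 1), ω.adj i⟩

/-! Since every edge of `E_J` is non-negative, an edge `(μ₁, e₁ν₁) → (μ₂, e₂ν₂)` forces `ν₁ ≼ μ₂`;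
hence two vertices with the same `E`-label and a common successor have comparable second
coordinates, and so coincide because the cylinders `Z(ν)` are disjoint and non-empty. Thus `(E_J, E)`
is left-resolving: two paths with the same `E`-label and distinct sources are distinct at every
step. If they are longer than `|J|²`, some pair of simultaneous positions repeats, and the two
segments between the repetitions are distinct cycles with the same `E`-label. -/

noncomputable def FPath.extendEdges (hsink : ∀ v : G.V, ∃ e, G.src e = v) (p : FPath G) :
    ℕ → G.E
  | 0 => if h : 0 < p.edges.length then p.edges[0] else (hsink p.source).choose
  | n + 1 => if h : n + 1 < p.edges.length then p.edges[n + 1]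
      else (hsink (G.rng (p.extendEdges hsink n))).choose

lemma FPath.extendEdges_of_lt (hsink : ∀ v : G.V, ∃ e, G.src e = v) (p : FPath G) {i : ℕ}
    (hi : i < p.edges.length) : p.extendEdges hsink i = p.edges[i] := by
  cases i <;> simp [extendEdges, hi]

lemma FPath.rng_extendEdges (hsink : ∀ v : G.V, ∃ e, G.src e = v) (p : FPath G) (i : ℕ) :
    G.rng (p.extendEdges hsink i) = G.src (p.extendEdges hsink (i + 1)) := by
  by_cases hi : i + 1 < p.edges.length
  · rw [p.extendEdges_of_lt hsink hi, p.extendEdges_of_lt hsink (by omega)]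
    exact List.isChain_iff_getElem.1 p.chain i hi
  · simp only [extendEdges, dif_neg hi]
    exact (hsink _).choose_spec.symm

lemma FPath.src_extendEdges_zero (hsink : ∀ v : G.V, ∃ e, G.src e = v) (p : FPath G) :
    G.src (p.extendEdges hsink 0) = p.source := by
  by_cases h : 0 < p.edges.length
  · rw [p.extendEdges_of_lt hsink h]
    exact p.head_src _ (by simp [List.head?_eq_getElem?, h])
  · simp only [extendEdges, dif_neg h]
    exact (hsink _).choose_spec

lemma cylinder_nonempty (hsink : ∀ v : G.V, ∃ e, G.src e = v) (p : FPath G) :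
    (cylinder p).Nonempty :=
  ⟨⟨p.extendEdges hsink, p.rng_extendEdges hsink⟩, p.src_extendEdges_zero hsink,
    fun _ hi => p.extendEdges_of_lt hsink hi⟩

lemma cylinder_anti {p q : FPath G} (h : p.Prefix q) : cylinder q ⊆ cylinder p := by
  rintro x ⟨hsrc, hedges⟩
  refine ⟨hsrc.trans h.1.symm, fun i hi => ?_⟩
  rw [hedges i (hi.trans_le h.2.length_le)]
  exact (h.2.getElem hi).symm

lemma FPath.prefix_of_head?_eq_of_tail_prefix {p q : FPath G} (hp : p.edges ≠ [])
    (hhead : p.edges.head? = q.edges.head?) (htail : p.tail.edges <+: q.tail.edges) :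
    p.Prefix q := by
  obtain ⟨a, l, hpl⟩ := List.exists_cons_of_ne_nil hp
  obtain ⟨b, k, hqk⟩ : ∃ b k, q.edges = b :: k := by
    cases hq : q.edges with
    | nil => simp [hpl, hq] at hhead
    | cons b k => exact ⟨b, k, rfl⟩
  obtain rfl : a = b := by simpa [hpl, hqk] using hhead
  refine ⟨?_, ?_⟩
  · rw [← p.head_src a (by simp [hpl]), ← q.head_src a (by simp [hqk])]
  · simp only [FPath.tail, hpl, hqk, List.tail_cons] at htail ⊢
    exact List.cons_prefix_cons.2 ⟨rfl, htail⟩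

lemma tail_prefix_of_cgAdj {p q : FPath G × FPath G} (hadj : CGAdj p q)
    (hdeg : 0 ≤ cgDeg p q) : p.2.tail.Prefix q.1 := by
  rcases hadj with h | h
  · exact h
  · have hlen : p.2.tail.edges.length ≤ q.1.edges.length := by unfold cgDeg at hdeg; omega
    exact ⟨h.1.symm, h.2.eq_of_length_le hlen ▸ List.prefix_refl _⟩

lemma List.map_some_filterMap_of_isSome {α β : Type*} {f : α → Option β} {l : List α}
    (h : ∀ a ∈ l, (f a).isSome) : (l.filterMap f).map some = l.map f := by
  rw [List.map_filterMap, ← List.filterMap_eq_map]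
  refine List.filterMap_congr fun a ha => ?_
  obtain ⟨b, hb⟩ := Option.isSome_iff_exists.1 (h a ha)
  simp [hb]

lemma Fintype.exists_lt_map_eq_of_card_lt {α β : Type*} [LinearOrder α] [Fintype α]
    [Fintype β] (f : α → β) (h : Fintype.card β < Fintype.card α) :
    ∃ a b, a < b ∧ f a = f b := by
  obtain ⟨a, b, hne, hab⟩ := Fintype.exists_ne_map_eq_of_card_lt f h
  rcases hne.lt_or_gt with hlt | hlt
  exacts [⟨a, b, hlt, hab⟩, ⟨b, a, hlt, hab.symm⟩]

section CodingGraph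

variable {J : Set (FPath G × FPath G)}

lemma IsUnitaryJ.not_prefix_snd (hJ : IsUnitaryJ G J) (hsink : ∀ v : G.V, ∃ e, G.src e = v)
    {p q : FPath G × FPath G} (hp : p ∈ J) (hq : q ∈ J) (hpq : p ≠ q) : ¬ p.2.Prefix q.2 := by
  intro hpre
  obtain ⟨x, hx⟩ := cylinder_nonempty hsink q.2
  have hx' : x ∈ cylinder p.2 ∩ cylinder q.2 := ⟨cylinder_anti hpre hx, hx⟩
  rw [hJ.disj₂ p hp q hq hpq] at hx'
  exact hx'

lemma eq_of_cgAdj_of_head?_eq (hJ : IsUnitaryJ G J) (hsink : ∀ v : G.V, ∃ e, G.src e = v)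
    (hnn : AllEdgesNonneg G J) {p p' q : FPath G × FPath G} (hp : p ∈ J) (hp' : p' ∈ J)
    (hq : q ∈ J) (hadj : CGAdj p q) (hadj' : CGAdj p' q)
    (hlabel : p.2.edges.head? = p'.2.edges.head?) : p = p' := by
  by_contra hne
  have htail := (tail_prefix_of_cgAdj hadj (hnn p hp q hq hadj)).2
  have htail' := (tail_prefix_of_cgAdj hadj' (hnn p' hp' q hq hadj')).2
  rcases List.prefix_or_prefix_of_prefix htail htail' with h | h
  · exact hJ.not_prefix_snd hsink hp hp' hne
      (FPath.prefix_of_head?_eq_of_tail_prefix (hJ.ne_nil p hp) hlabel h)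
  · exact hJ.not_prefix_snd hsink hp' hp (Ne.symm hne)
      (FPath.prefix_of_head?_eq_of_tail_prefix (hJ.ne_nil p' hp') hlabel.symm h)

def CGPath.IsCycle (ω : CGPath G J) : Prop :=
  2 ≤ ω.verts.length ∧ ω.verts.getLast ω.ne = ω.verts.head ω.ne

def CGPath.headLabels (ω : CGPath G J) : List (Option G.E) :=
  ω.verts.map fun v => v.2.edges.head?

lemma CGPath.map_some_elabel (hJ : IsUnitaryJ G J) (ω : CGPath G J) :
    ω.elabel.map some = ω.headLabels :=
  List.map_some_filterMap_of_isSome fun v hv => by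
    simp [List.head?_eq_some_head (hJ.ne_nil v (ω.mem v hv))]

lemma CGPath.elabel_eq_iff (hJ : IsUnitaryJ G J) {ω ξ : CGPath G J} :
    ω.elabel = ξ.elabel ↔ ω.headLabels = ξ.headLabels := by
  rw [← ω.map_some_elabel hJ, ← ξ.map_some_elabel hJ,
    (List.map_injective_iff.2 (Option.some_injective G.E)).eq_iff]

lemma CGPath.getElem_ne_of_head_ne (hJ : IsUnitaryJ G J) (hsink : ∀ v : G.V, ∃ e, G.src e = v)
    (hnn : AllEdgesNonneg G J) {ω ξ : CGPath G J} (hlen : ω.verts.length = ξ.verts.length)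
    (hlabel : ω.headLabels = ξ.headLabels) (hhead : ω.verts.head ω.ne ≠ ξ.verts.head ξ.ne) :
    ∀ i (hi : i < ω.verts.length), ω.verts[i] ≠ ξ.verts[i] := by
  intro i
  induction i with
  | zero => exact fun _ => by simpa [List.head_eq_getElem] using hhead
  | succ i ih =>
    intro hi heq
    have hi' : i + 1 < ξ.verts.length := hlen ▸ hi
    have hsame : (ω.verts[i]).2.edges.head? = (ξ.verts[i]).2.edges.head? := by
      simpa [CGPath.headLabels, List.getElem?_eq_getElem (Nat.lt_of_succ_lt hi'),
        List.getElem?_eq_getElem (Nat.lt_of_succ_lt hi)]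
        using congrArg (·[i]?) hlabel
    have hadj : CGAdj ξ.verts[i] ω.verts[i + 1] := heq ▸ List.isChain_iff_getElem.1 ξ.adj i hi'
    exact ih (by omega) <| eq_of_cgAdj_of_head?_eq hJ hsink hnn (ω.mem _ (List.getElem_mem _))
      (ξ.mem _ (List.getElem_mem _)) (ω.mem _ (List.getElem_mem hi))
      (List.isChain_iff_getElem.1 ω.adj i hi) hadj hsame

def CGPath.slice (ω : CGPath G J) (i j : ℕ) (hij : i ≤ j) (hj : j < ω.verts.length) :
    CGPath G J where
  verts := (ω.verts.take (j + 1)).drop i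
  ne := List.ne_nil_of_length_pos (by rw [List.length_drop, List.length_take]; omega)
  mem v hv := ω.mem v (List.mem_of_mem_take (List.mem_of_mem_drop hv))
  adj := (ω.adj.take _).drop _

lemma CGPath.slice_isCycle (ω : CGPath G J) {i j : ℕ} (hij : i < j) (hj : j < ω.verts.length)
    (hrep : ω.verts[i] = ω.verts[j]) : (ω.slice i j hij.le hj).IsCycle := by
  refine ⟨by simp only [CGPath.slice, List.length_drop, List.length_take]; omega, ?_⟩
  simp only [CGPath.slice, List.getLast_eq_getElem, List.head_eq_getElem, List.getElem_drop,
    List.getElem_take]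
  simpa [List.length_drop, List.length_take, show i + (min (j + 1) ω.verts.length - i - 1) = j by
    omega] using hrep.symm

lemma CGPath.slice_head (ω : CGPath G J) {i j : ℕ} (hij : i ≤ j) (hj : j < ω.verts.length) :
    (ω.slice i j hij hj).verts.head (ω.slice i j hij hj).ne = ω.verts[i] := by
  simp [CGPath.slice, List.head_eq_getElem]

lemma CGPath.headLabels_slice (ω : CGPath G J) {i j : ℕ} (hij : i ≤ j)
    (hj : j < ω.verts.length) :
    (ω.slice i j hij hj).headLabels = (ω.headLabels.take (j + 1)).drop i := by
  simp [CGPath.slice, CGPath.headLabels, List.map_drop, List.map_take]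

end CodingGraph

theorem not_sync_two_cycles_general (G : FinGraph) (hG : Standing G)
    (J : Set (FPath G × FPath G)) (hJ : IsUnitaryJ G J)
    (hnn : AllEdgesNonneg G J)
    (hns : ¬ ∃ m, LeftSyncDelay G J m) :
    ∃ ω ξ : CGPath G J,
      2 ≤ ω.verts.length ∧ ω.verts.getLast ω.ne = ω.verts.head ω.ne ∧
      2 ≤ ξ.verts.length ∧ ξ.verts.getLast ξ.ne = ξ.verts.head ξ.ne ∧
      ω ≠ ξ ∧ ω.elabel = ξ.elabel := by
  let := hJ.finite.fintype
  have hfail : ¬ LeftSyncDelay G J (Fintype.card (J × J)) := fun h => hns ⟨_, h⟩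
  simp only [LeftSyncDelay, not_forall] at hfail
  obtain ⟨ω, ξ, hω, hξ, hlabel, hhead⟩ := hfail
  rw [CGPath.elabel_eq_iff hJ] at hlabel
  have hne := CGPath.getElem_ne_of_head_ne hJ hG.no_sinks hnn (hω.trans hξ.symm) hlabel hhead
  obtain ⟨i, j, hij, hrep⟩ := Fintype.exists_lt_map_eq_of_card_lt
    (fun k : Fin (Fintype.card (J × J) + 1) =>
      ((⟨ω.verts[k.1], ω.mem _ (List.getElem_mem _)⟩ : J),
        (⟨ξ.verts[k.1], ξ.mem _ (List.getElem_mem _)⟩ : J)))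
    (by simp)
  simp only [Prod.mk.injEq, Subtype.mk.injEq] at hrep
  have hj : j.1 < ω.verts.length := by have := j.2; omega
  have hj' : j.1 < ξ.verts.length := by have := j.2; omega
  obtain ⟨hωcyc₁, hωcyc₂⟩ := ω.slice_isCycle hij hj hrep.1
  obtain ⟨hξcyc₁, hξcyc₂⟩ := ξ.slice_isCycle hij hj' hrep.2
  refine ⟨_, _, hωcyc₁, hωcyc₂, hξcyc₁, hξcyc₂, fun h => hne i (by have := i.2; omega) ?_, ?_⟩
  · rw [← ω.slice_head hij.le hj, ← ξ.slice_head hij.le hj']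
    simp only [h]
  · rw [CGPath.elabel_eq_iff hJ, CGPath.headLabels_slice, CGPath.headLabels_slice, hlabel]

/-- Lemma 5.5: if all edges of `E_J` are non-negative, `E_J` has no
non-positive cycles, and `(E_J, E)` is not left-synchronizing, then there exist two
distinct cycles in `E_J` with the same `E`-label. -/
theorem not_sync_two_cycles (G : FinGraph) (hG : Standing G)
    (J : Set (FPath G × FPath G)) (hJ : IsUnitaryJ G J)
    (hnn : AllEdgesNonneg G J) (hnc : ¬ HasNonposCycle G J)
    (hns : ¬ ∃ m, LeftSyncDelay G J m) :
    ∃ ω ξ : CGPath G J,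
      2 ≤ ω.verts.length ∧ ω.verts.getLast ω.ne = ω.verts.head ω.ne ∧
      2 ≤ ξ.verts.length ∧ ξ.verts.getLast ξ.ne = ξ.verts.head ξ.ne ∧
      ω ≠ ξ ∧ ω.elabel = ξ.elabel :=
  not_sync_two_cycles_general G hG J hJ hnn hns
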